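/- arXiv:2509.19561 — 4 statements merged into one kernel-verified Lean document; each statement's English description precedes it below -/
import Mathlib

section
/- Assume in addition β_k = η √(s_k)/2 for some η ∈ (0,1], Assumption (J0), and α > 3. Then Σ_{k≥1} s_k k (f(x_k) − min f) < ∞. -/
set_option autoImplicit false

set_option maxHeartbeats 2000000
open RealInnerProductSpace

section IGAHDaux
variable {H : Type*} [NormedAddCommGroup H] [InnerProductSpace ℝ H] [CompleteSpace H]

lemma line_hasDerivAt (f : H → ℝ) (f' : H → H)
    (hdiff : ∀ z, HasGradientAt f (f' z) z) (a v : H) (θ : ℝ) :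
    HasDerivAt (fun τ : ℝ => f (a + τ • v)) (⟪f' (a + θ • v), v⟫) θ := by
  have h1 : HasDerivAt (fun τ : ℝ => a + τ • v) v θ := by
    simpa using ((hasDerivAt_id θ).smul_const v).const_add a
  have h2 := (hdiff (a + θ • v)).hasFDerivAt
  exact (by simpa [InnerProductSpace.toDual_apply_apply] using h2.comp_hasDerivAt θ h1 :
    HasDerivAt (f ∘ fun τ : ℝ => a + τ • v) (⟪f' (a + θ • v), v⟫) θ)

lemma subgrad (f : H → ℝ) (f' : H → H) (hconv : ConvexOn ℝ Set.univ f)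
    (hdiff : ∀ z, HasGradientAt f (f' z) z) (a b : H) :
    f a + ⟪f' a, b - a⟫ ≤ f b := by
  have hφconv : ConvexOn ℝ Set.univ (fun τ : ℝ => f (a + τ • (b - a))) := by
    have := hconv.comp_affineMap (AffineMap.lineMap a b)
    simp only [Set.preimage_univ] at this
    have heq : (f ∘ ⇑(AffineMap.lineMap a b)) = (fun τ : ℝ => f (a + τ • (b - a))) := by
      funext τ
      simp only [Function.comp_apply, AffineMap.lineMap_apply, vsub_eq_sub, vadd_eq_add]
      rw [add_comm]
    rw [heq] at this
    exact this
  have hD := line_hasDerivAt f f' hdiff a (b - a) 0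
  simp only [zero_smul, add_zero] at hD
  have := hφconv.le_slope_of_hasDerivAt (Set.mem_univ (0:ℝ)) (Set.mem_univ (1:ℝ))
    zero_lt_one hD
  rw [slope_def_field] at this
  simp only [one_smul, zero_smul, add_zero] at this
  have hb : a + (b - a) = b := by abel
  rw [hb] at this
  -- this : ⟪f' a, b - a⟫ ≤ (f b - f a) / (1 - 0)
  norm_num at this
  linarith

lemma descent (f : H → ℝ) (f' : H → H) (L : ℝ) (hL : 0 < L)
    (hdiff : ∀ z, HasGradientAt f (f' z) z)
    (hlip : ∀ z w, ‖f' z - f' w‖ ≤ L * ‖z - w‖) (a b : H) :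
    f b ≤ f a + ⟪f' a, b - a⟫ + L / 2 * ‖b - a‖ ^ 2 := by
  set v := b - a with hv
  set ψ : ℝ → ℝ := fun τ => f (a + τ • v) - τ * ⟪f' a, v⟫ - τ ^ 2 * (L / 2 * ‖v‖ ^ 2)
    with hψ
  have hd : ∀ τ : ℝ, HasDerivAt ψ
      (⟪f' (a + τ • v), v⟫ - ⟪f' a, v⟫ - 2 * τ * (L / 2 * ‖v‖ ^ 2)) τ := by
    intro τ
    have h1 := line_hasDerivAt f f' hdiff a v τ
    have h2 : HasDerivAt (fun τ : ℝ => τ * ⟪f' a, v⟫) (⟪f' a, v⟫) τ := by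
      simpa using (hasDerivAt_id τ).mul_const (⟪f' a, v⟫)
    have h3 : HasDerivAt (fun τ : ℝ => τ ^ 2 * (L / 2 * ‖v‖ ^ 2))
        (2 * τ * (L / 2 * ‖v‖ ^ 2)) τ := by
      simpa [pow_one] using (hasDerivAt_pow 2 τ).mul_const (L / 2 * ‖v‖ ^ 2)
    exact (h1.sub h2).sub h3
  have hanti : AntitoneOn ψ (Set.Icc (0:ℝ) 1) := by
    apply antitoneOn_of_deriv_nonpos (convex_Icc 0 1)
    · exact fun τ _ => ((hd τ).continuousAt).continuousWithinAt
    · intro τ _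
      exact ((hd τ).differentiableAt).differentiableWithinAt
    · intro τ hτ
      rw [interior_Icc] at hτ
      rw [(hd τ).deriv]
      have hsub : ⟪f' (a + τ • v), v⟫ - ⟪f' a, v⟫ = ⟪f' (a + τ • v) - f' a, v⟫ := by
        rw [inner_sub_left]
      have hcs : (⟪f' (a + τ • v) - f' a, v⟫) ≤ ‖f' (a + τ • v) - f' a‖ * ‖v‖ :=
        real_inner_le_norm _ _
      have hlip' : ‖f' (a + τ • v) - f' a‖ ≤ L * (τ * ‖v‖) := by
        have := hlip (a + τ • v) a
        simpa [norm_smul, abs_of_pos hτ.1, mul_assoc] using this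
      have hv0 : (0:ℝ) ≤ ‖v‖ := norm_nonneg _
      nlinarith [hτ.1.le, hcs, hlip', mul_le_mul_of_nonneg_right hlip' hv0]
  have h01 := hanti (Set.mem_Icc.2 ⟨le_refl 0, zero_le_one⟩)
    (Set.mem_Icc.2 ⟨zero_le_one, le_refl 1⟩) zero_le_one
  simp only [hψ, one_smul, zero_smul, add_zero, one_pow, one_mul, zero_mul, zero_pow,
    sub_zero, mul_zero] at h01
  have hb : a + v = b := by rw [hv]; abel
  rw [hb] at h01
  linarith

lemma strong_convexity_ineq (f : H → ℝ) (f' : H → H) (L : ℝ) (hL : 0 < L)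
    (hconv : ConvexOn ℝ Set.univ f)
    (hdiff : ∀ z, HasGradientAt f (f' z) z)
    (hlip : ∀ z w, ‖f' z - f' w‖ ≤ L * ‖z - w‖)
    (hsub : ∀ a b : H, f a + ⟪f' a, b - a⟫ ≤ f b) (y z : H) :
    f y + ⟪f' y, z - y⟫ + 1 / (2 * L) * ‖f' z - f' y‖ ^ 2 ≤ f z := by
  set u := f' z - f' y with hu
  have h1 := descent f f' L hL hdiff hlip z (z - (1 / L) • u)
  have h2 := hsub y (z - (1 / L) • u)
  have e1 : z - (1 / L) • u - z = -((1 / L) • u) := by abel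
  have e2 : (⟪f' z, -((1 / L) • u)⟫) = -(1 / L) * ⟪f' z, u⟫ := by
    rw [inner_neg_right, real_inner_smul_right]; ring
  have e3 : ‖-((1 / L) • u)‖ ^ 2 = (1 / L) ^ 2 * ‖u‖ ^ 2 := by
    rw [norm_neg, norm_smul, Real.norm_eq_abs, abs_of_pos (by positivity : (0:ℝ) < 1 / L)]
    ring
  rw [e1, e2, e3] at h1
  have e4 : z - (1 / L) • u - y = (z - y) - (1 / L) • u := by abel
  have e5 : (⟪f' y, z - y - (1 / L) • u⟫)
      = ⟪f' y, z - y⟫ - (1 / L) * ⟪f' y, u⟫ := by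
    rw [inner_sub_right, real_inner_smul_right]
  rw [e4, e5] at h2
  have e6 : (⟪f' z, u⟫) - ⟪f' y, u⟫ = ‖u‖ ^ 2 := by
    rw [← inner_sub_left, ← hu, real_inner_self_eq_norm_sq]
  have hL' : (1 / L) * ⟪f' z, u⟫ - (1 / L) * ⟪f' y, u⟫ = (1 / L) * ‖u‖ ^ 2 := by
    rw [← mul_sub, e6]
  have hfin : L / 2 * ((1 / L) ^ 2 * ‖u‖ ^ 2) = 1 / (2 * L) * ‖u‖ ^ 2 := by
    field_simp
  have hhalf : 1 / L * ‖u‖ ^ 2 - 1 / (2 * L) * ‖u‖ ^ 2 = 1 / (2 * L) * ‖u‖ ^ 2 := by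
    field_simp
    ring
  linarith [h1, h2, hL', hfin, hhalf]



lemma inner_lb (a c : H) : -(1/2*‖a‖^2 + 1/2*‖c‖^2) ≤ ⟪a, c⟫ := by
  have h := real_inner_le_norm a (-c)
  rw [inner_neg_right, norm_neg] at h
  nlinarith [sq_nonneg (‖a‖ - ‖c‖)]

lemma step_ineq (f : H → ℝ) (f' : H → H) (L : ℝ) (hL : 0 < L)
    (hdiff : ∀ z, HasGradientAt f (f' z) z)
    (hlip : ∀ z w, ‖f' z - f' w‖ ≤ L * ‖z - w‖)
    (hstrong : ∀ y z : H, f y + ⟪f' y, z - y⟫ + 1 / (2*L) * ‖f' z - f' y‖^2 ≤ f z)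
    (hdescent : ∀ a b : H, f b ≤ f a + ⟪f' a, b - a⟫ + L / 2 * ‖b - a‖^2)
    (xstar : H) (hstar0 : f' xstar = 0)
    (S T B : ℝ) (xk xk1 yk Mxk Myk zk zk1 : H)
    (hS0 : 0 < S) (hSL : S * L ≤ 1) (hB0 : 0 ≤ B) (hB : B ≤ S / 2) (hT : 2 ≤ T)
    (hxk1 : xk1 = yk - S • (f' yk + Myk))
    (hzk1 : zk1 = xk + T • (xk1 - xk) + (T * B) • (f' xk + Mxk))
    (hzk : zk = T • yk - (T - 1) • xk + (T * B) • (f' xk + Mxk)) :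
    1/2*‖zk1 - xstar‖^2 ≤ 1/2*‖zk - xstar‖^2 - S*T*(T-1)*(f xk1 - f xk)
      - S*T*(f xk1 - f xstar) + S*T*‖Myk‖*‖zk1 - xstar‖ + S*T^2*B/2*‖Mxk‖^2 := by
  have hT0 : (0:ℝ) ≤ T := by linarith
  have hT10 : (0:ℝ) ≤ T - 1 := by linarith
  have hST0 : (0:ℝ) ≤ S * T := mul_nonneg hS0.le hT0
  set g : H := f' yk + Myk with hg
  set u : H := zk - xstar with hu0
  set u' : H := zk1 - xstar with hu0'
  -- the key recursion
  have hrec : u' = u - (S*T) • g := by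
    rw [hu0, hu0', hzk1, hzk, hxk1]; module
  have hexp : ‖u'‖^2 = ‖u‖^2 - 2*(S*T)*⟪g, u⟫ + (S*T)^2*‖g‖^2 := by
    have h1 : (⟪u, (S*T) • g⟫) = (S*T)*⟪g, u⟫ := by
      rw [real_inner_smul_right, real_inner_comm]
    rw [hrec, norm_sub_sq_real, h1, norm_smul, Real.norm_eq_abs, abs_of_nonneg hST0]
    ring
  -- generic combined descent + strong convexity inequality
  have key : ∀ w : H, (f xk1 - f w) + S/2*‖g‖^2 + 1/(2*L)*‖f' w - f' yk‖^2
      - ⟪Myk, w - xk1⟫ ≤ ⟪g, yk - w⟫ := by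
    intro w
    have hdes := hdescent yk xk1
    have hst := hstrong yk w
    have h1 : xk1 - yk = -(S • g) := by rw [hxk1]; abel
    rw [h1] at hdes
    have h2 : (⟪f' yk, -(S • g)⟫) = -(S*⟪g,g⟫) + S*⟪Myk, g⟫ := by
      have hfy : f' yk = g - Myk := by rw [hg]; abel
      rw [inner_neg_right, real_inner_smul_right, hfy, inner_sub_left]; ring
    have h3 : ‖-(S • g)‖^2 = S^2*‖g‖^2 := by
      rw [norm_neg, norm_smul, Real.norm_eq_abs, abs_of_nonneg hS0.le]; ring
    rw [h2, h3] at hdes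
    have h4 : (⟪f' yk, w - yk⟫) = -(⟪g, yk - w⟫) + ⟪Myk, yk - w⟫ := by
      have hfy : f' yk = g - Myk := by rw [hg]; abel
      rw [show w - yk = -(yk - w) by abel, inner_neg_right, hfy, inner_sub_left]
      ring
    rw [h4] at hst
    have h5 : (⟪g,g⟫) = ‖g‖^2 := real_inner_self_eq_norm_sq g
    have h6 : (⟪Myk, w - xk1⟫) = S*(⟪Myk, g⟫) - ⟪Myk, yk - w⟫ := by
      have h7 : w - xk1 = S • g - (yk - w) := by rw [hxk1]; abel
      rw [h7]
      simp only [inner_sub_right, real_inner_smul_right]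
    have hLS : L/2*(S^2*‖g‖^2) ≤ S/2*‖g‖^2 := by
      nlinarith [mul_nonneg (mul_nonneg hS0.le hS0.le) (sq_nonneg ‖g‖),
        mul_nonneg (sub_nonneg.2 hSL) (mul_nonneg hS0.le (sq_nonneg ‖g‖))]
    rw [h5] at hdes
    linarith [hdes, hst]
  have hF2 := key xk
  have hF3' := key xstar
  rw [hstar0, zero_sub, norm_neg] at hF3'
  have hu_dec : (⟪g, u⟫) = (T-1)*⟪g, yk - xk⟫ + ⟪g, yk - xstar⟫
      + (T*B)*⟪g, f' xk + Mxk⟫ := by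
    have h1 : u = (T-1) • (yk - xk) + (yk - xstar) + (T*B) • (f' xk + Mxk) := by
      rw [hu0, hzk]; module
    rw [h1]
    simp only [inner_add_right, real_inner_smul_right]
    try ring
  have hgG : -(1/2)*‖f' xk - f' yk‖^2 - (1/2)*‖Mxk‖^2 + ⟪Myk, f' xk + Mxk⟫
      ≤ ⟪g, f' xk + Mxk⟫ := by
    have e : (⟪g, f' xk + Mxk⟫) = ⟪f' yk, f' yk⟫ + ⟪f' yk, f' xk - f' yk⟫
        + ⟪f' yk, Mxk⟫ + ⟪Myk, f' xk + Mxk⟫ := by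
      rw [hg, inner_add_left, inner_add_right]
      rw [show (⟪f' yk, f' xk⟫:ℝ) = ⟪f' yk, f' yk⟫ + ⟪f' yk, f' xk - f' yk⟫ by
        rw [inner_sub_right]; try ring]
      try ring
    have k1 := inner_lb (f' yk) (f' xk - f' yk)
    have k2 := inner_lb (f' yk) Mxk
    have k3 : (⟪f' yk, f' yk⟫) = ‖f' yk‖^2 := real_inner_self_eq_norm_sq _
    linarith [e, k1, k2, k3]
  have hbr : (⟪Myk, u'⟫) = -((T-1)*⟪Myk, xk - xk1⟫) - ⟪Myk, xstar - xk1⟫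
      + (T*B)*⟪Myk, f' xk + Mxk⟫ := by
    have h1 : u' = -((T-1) • (xk - xk1)) - (xstar - xk1) + (T*B) • (f' xk + Mxk) := by
      rw [hu0', hzk1]; module
    rw [h1]
    simp only [inner_add_right, inner_sub_right, inner_neg_right, real_inner_smul_right]
    try ring
  have hMy : -(‖Myk‖*‖u'‖) ≤ ⟪Myk, u'⟫ := by
    have h := real_inner_le_norm Myk (-u')
    rw [inner_neg_right, norm_neg] at h
    linarith
  -- lower bound for ⟪g, u⟫
  have c1 : 0 ≤ (T-1) * (⟪g, yk - xk⟫ - ((f xk1 - f xk) + S/2*‖g‖^2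
      + 1/(2*L)*‖f' xk - f' yk‖^2 - ⟪Myk, xk - xk1⟫)) :=
    mul_nonneg hT10 (sub_nonneg.2 hF2)
  have c3 : 0 ≤ (T*B) * (⟪g, f' xk + Mxk⟫ - (-(1/2)*‖f' xk - f' yk‖^2
      - (1/2)*‖Mxk‖^2 + ⟪Myk, f' xk + Mxk⟫)) :=
    mul_nonneg (mul_nonneg hT0 hB0) (sub_nonneg.2 hgG)
  have hGUlb : (T-1)*(f xk1 - f xk) + (f xk1 - f xstar) + T*(S/2*‖g‖^2)
      + ((T-1)*(1/(2*L)) - T*B/2)*‖f' xk - f' yk‖^2 + 1/(2*L)*‖f' yk‖^2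
      - T*B/2*‖Mxk‖^2 + ⟪Myk, u'⟫ ≤ ⟪g, u⟫ := by
    nlinarith [c1, c3, hF3', hu_dec, hbr]
  have hcoef : 0 ≤ (T-1)*(1/(2*L)) - T*B/2 := by
    have hS_le : S ≤ 1/L := by rw [le_div_iff₀ hL]; exact hSL
    have hiL : 0 < 1/L := by positivity
    have h2L : 1/L = 2*(1/(2*L)) := by field_simp
    nlinarith [mul_nonneg hT0 (sub_nonneg.2 (le_trans hB (by linarith : S/2 ≤ 1/L/2))),
      mul_nonneg hiL.le (by linarith : (0:ℝ) ≤ T - 2), h2L]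
  have cST : 0 ≤ (S*T) * ((⟪g, u⟫) - ((T-1)*(f xk1 - f xk) + (f xk1 - f xstar)
      + T*(S/2*‖g‖^2) + ((T-1)*(1/(2*L)) - T*B/2)*‖f' xk - f' yk‖^2
      + 1/(2*L)*‖f' yk‖^2 - T*B/2*‖Mxk‖^2 + ⟪Myk, u'⟫)) :=
    mul_nonneg hST0 (sub_nonneg.2 hGUlb)
  have cW : 0 ≤ (S*T) * ((⟪Myk, u'⟫) + ‖Myk‖*‖u'‖) :=
    mul_nonneg hST0 (by linarith)
  have cND : 0 ≤ (S*T) * (((T-1)*(1/(2*L)) - T*B/2) * ‖f' xk - f' yk‖^2) :=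
    mul_nonneg hST0 (mul_nonneg hcoef (sq_nonneg _))
  have cNp : 0 ≤ (S*T) * (1/(2*L) * ‖f' yk‖^2) :=
    mul_nonneg hST0 (mul_nonneg (by positivity) (sq_nonneg _))
  nlinarith [hexp, cST, cW, cND, cNp]


lemma sqrt_gronwall (u a : ℕ → ℝ) (K : ℕ) (C A : ℝ) (hC : 0 ≤ C)
    (ha : ∀ k, 0 ≤ a k)
    (hA : ∀ N, ∑ k ∈ Finset.Ico K (N+1), a k ≤ A)
    (h : ∀ N, K ≤ N → u (N+1) ≤ C + ∑ k ∈ Finset.Ico K (N+1),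
      a k * Real.sqrt (2 * u (k+1))) :
    ∀ N, K ≤ N → u (N+1) ≤ (Real.sqrt C + Real.sqrt 2 * A)^2 := by
  set Sf : ℕ → ℝ := fun N => C + ∑ k ∈ Finset.Ico K (N+1),
    a k * Real.sqrt (2 * u (k+1)) with hSf
  have hSnn : ∀ N, 0 ≤ Sf N := by
    intro N
    have : 0 ≤ ∑ k ∈ Finset.Ico K (N+1), a k * Real.sqrt (2 * u (k+1)) :=
      Finset.sum_nonneg fun k _ => mul_nonneg (ha k) (Real.sqrt_nonneg _)
    simp only [hSf]; linarith
  have hAnn : 0 ≤ A :=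
    le_trans (Finset.sum_nonneg fun k _ => ha k) (hA K)
  -- main induction : sqrt (Sf N) ≤ sqrt C + sqrt 2 * partial sum of a
  have hkey : ∀ N, K ≤ N → Real.sqrt (Sf N) ≤ Real.sqrt C
      + Real.sqrt 2 * ∑ k ∈ Finset.Ico K (N+1), a k := by
    intro N hN
    induction N, hN using Nat.le_induction with
    | base =>
      have hsum : Finset.Ico K (K+1) = {K} := by
        rw [Finset.Ico_add_one_right_eq_Icc, Finset.Icc_self]
      have hS : Sf K = C + a K * Real.sqrt (2 * u (K+1)) := by
        simp only [hSf, hsum, Finset.sum_singleton]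
      have hu : u (K+1) ≤ Sf K := by
        have := h K le_rfl
        simp only [hSf]; linarith
      have hle : Sf K ≤ C + a K * (Real.sqrt 2 * Real.sqrt (Sf K)) := by
        have h1 : Real.sqrt (2 * u (K+1)) ≤ Real.sqrt (2 * Sf K) :=
          Real.sqrt_le_sqrt (by linarith)
        have h2 : Real.sqrt (2 * Sf K) = Real.sqrt 2 * Real.sqrt (Sf K) :=
          Real.sqrt_mul (by norm_num) _
        have := mul_le_mul_of_nonneg_left h1 (ha K)
        rw [h2] at this
        linarith [hS]
      -- conclude sqrt (Sf K) ≤ sqrt C + sqrt 2 * a K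
      have hP : Real.sqrt (Sf K) ^ 2 = Sf K := Real.sq_sqrt (hSnn K)
      have hQ : Real.sqrt C ^ 2 = C := Real.sq_sqrt hC
      have hP0 : 0 ≤ Real.sqrt (Sf K) := Real.sqrt_nonneg _
      have hQ0 : 0 ≤ Real.sqrt C := Real.sqrt_nonneg _
      have hc0 : 0 ≤ Real.sqrt 2 * a K := mul_nonneg (Real.sqrt_nonneg _) (ha K)
      rw [hsum, Finset.sum_singleton]
      nlinarith [hle, hP, hQ, hP0, hQ0, hc0, sq_nonneg (Real.sqrt (Sf K) - Real.sqrt C)]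
    | succ N hKN ih =>
      have hstep : Sf (N+1) = Sf N + a (N+1) * Real.sqrt (2 * u (N+1+1)) := by
        simp only [hSf]
        rw [Finset.sum_Ico_succ_top (by omega : K ≤ N + 1)]
        ring
      have hu : u (N+1+1) ≤ Sf (N+1) := by
        have := h (N+1) (by omega)
        simp only [hSf] at this ⊢
        linarith
      have hle : Sf (N+1) ≤ Sf N + a (N+1) * (Real.sqrt 2 * Real.sqrt (Sf (N+1))) := by
        have h1 : Real.sqrt (2 * u (N+1+1)) ≤ Real.sqrt (2 * Sf (N+1)) :=
          Real.sqrt_le_sqrt (by linarith)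
        have h2 : Real.sqrt (2 * Sf (N+1)) = Real.sqrt 2 * Real.sqrt (Sf (N+1)) :=
          Real.sqrt_mul (by norm_num) _
        have := mul_le_mul_of_nonneg_left h1 (ha (N+1))
        rw [h2] at this
        linarith [hstep]
      have hstep2 : Real.sqrt (Sf (N+1)) ≤ Real.sqrt (Sf N) + Real.sqrt 2 * a (N+1) := by
        have hP : Real.sqrt (Sf (N+1)) ^ 2 = Sf (N+1) := Real.sq_sqrt (hSnn _)
        have hQ : Real.sqrt (Sf N) ^ 2 = Sf N := Real.sq_sqrt (hSnn _)
        have hP0 : 0 ≤ Real.sqrt (Sf (N+1)) := Real.sqrt_nonneg _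
        have hQ0 : 0 ≤ Real.sqrt (Sf N) := Real.sqrt_nonneg _
        have hc0 : 0 ≤ Real.sqrt 2 * a (N+1) := mul_nonneg (Real.sqrt_nonneg _) (ha _)
        nlinarith [hle, sq_nonneg (Real.sqrt (Sf (N+1)) - Real.sqrt (Sf N))]
      have hsum2 : ∑ k ∈ Finset.Ico K (N+1+1), a k
          = (∑ k ∈ Finset.Ico K (N+1), a k) + a (N+1) := by
        rw [Finset.sum_Ico_succ_top (by omega : K ≤ N + 1)]
      rw [hsum2]
      have hs2 : (0:ℝ) ≤ Real.sqrt 2 := Real.sqrt_nonneg _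
      calc Real.sqrt (Sf (N+1)) ≤ Real.sqrt (Sf N) + Real.sqrt 2 * a (N+1) := hstep2
        _ ≤ Real.sqrt C + Real.sqrt 2 * ∑ k ∈ Finset.Ico K (N+1), a k
            + Real.sqrt 2 * a (N+1) := by linarith [ih]
        _ = Real.sqrt C + Real.sqrt 2 * ((∑ k ∈ Finset.Ico K (N+1), a k) + a (N+1)) := by
            ring
  intro N hN
  have h1 : u (N+1) ≤ Sf N := by
    have := h N hN
    simp only [hSf]; linarith
  have h2 : Real.sqrt (Sf N) ≤ Real.sqrt C + Real.sqrt 2 * A := by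
    have := hkey N hN
    have hA' := hA N
    have hs2 : (0:ℝ) ≤ Real.sqrt 2 := Real.sqrt_nonneg _
    nlinarith [mul_le_mul_of_nonneg_left hA' hs2]
  have h3 : Sf N = Real.sqrt (Sf N) ^ 2 := (Real.sq_sqrt (hSnn N)).symm
  have h4 : Real.sqrt (Sf N) ^ 2 ≤ (Real.sqrt C + Real.sqrt 2 * A)^2 := by
    apply sq_le_sq'
    · nlinarith [Real.sqrt_nonneg (Sf N), Real.sqrt_nonneg C,
        mul_nonneg (Real.sqrt_nonneg 2) hAnn]
    · exact h2
  linarith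

end IGAHDaux


/-- Theorem 2.1(iii): for `α > 3`, `Σ s_k k (f(x_k) − min f) < ∞`. -/
theorem igahd_values_summability
    {H : Type*} [NormedAddCommGroup H] [InnerProductSpace ℝ H] [CompleteSpace H]
    (f : H → ℝ) (f' : H → H) (L : ℝ) (hL : 0 < L)
    (hconv : ConvexOn ℝ Set.univ f)
    (hdiff : ∀ z, HasGradientAt f (f' z) z)
    (hlip : ∀ z w, ‖f' z - f' w‖ ≤ L * ‖z - w‖)
    (xstar : H) (hmin : ∀ z, f xstar ≤ f z)
    (α : ℝ) (hα : 3 < α)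
    (s β : ℕ → ℝ) (hs0 : s 0 = 0) (hβ0 : β 0 = 0)
    (hs_pos : ∀ k, 1 ≤ k → 0 < s k) (hs_le : ∀ k, 1 ≤ k → s k ≤ 1 / L)
    (hs_dec : ∀ k, 1 ≤ k → s (k + 1) ≤ s k)
    (η : ℝ) (hη0 : 0 < η) (hη1 : η ≤ 1)
    (hβ : ∀ k, 1 ≤ k → β k = η * Real.sqrt (s k) / 2)
    (x y Mx My : ℕ → H)
    (hx_init : x 1 = x 0)
    (hy : ∀ k, 1 ≤ k → y k = x k + (1 - α / (k : ℝ)) • (x k - x (k - 1))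
        - (β k * Real.sqrt (s k)) • (f' (x k) + Mx k)
        + (β (k - 1) * Real.sqrt (s (k - 1)) * (1 - 1 / (k : ℝ))) •
            (f' (x (k - 1)) + Mx (k - 1)))
    (hx : ∀ k, 1 ≤ k → x (k + 1) = y k - s k • (f' (y k) + My k))
    (hJ0x : Summable fun k : ℕ => s k * (k : ℝ) * ‖Mx k‖)
    (hJ0y : Summable fun k : ℕ => s k * (k : ℝ) * ‖My k‖) :
    Summable fun k : ℕ => s k * (k : ℝ) * (f (x k) - f xstar) := by
  -- basic scalar facts
  have hα1 : (0:ℝ) < α - 1 := by linarith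
  have hane : α - 1 ≠ 0 := ne_of_gt hα1
  have hsub : ∀ a b : H, f a + ⟪f' a, b - a⟫ ≤ f b := subgrad f f' hconv hdiff
  have hdes : ∀ a b : H, f b ≤ f a + ⟪f' a, b - a⟫ + L / 2 * ‖b - a‖ ^ 2 :=
    descent f f' L hL hdiff hlip
  have hstrong : ∀ a c : H, f a + ⟪f' a, c - a⟫ + 1 / (2 * L) * ‖f' c - f' a‖ ^ 2 ≤ f c :=
    strong_convexity_ineq f f' L hL hconv hdiff hlip hsub
  have hloc : IsLocalMin f xstar := Filter.Eventually.of_forall fun w => hmin w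
  have hstar0 : f' xstar = 0 := by
    have h0 : InnerProductSpace.toDual ℝ H (f' xstar) = 0 :=
      hloc.hasFDerivAt_eq_zero (hdiff xstar).hasFDerivAt
    exact (LinearIsometryEquiv.map_eq_zero_iff _).1 h0
  have hδ : ∀ j : ℕ, 0 ≤ f (x j) - f xstar := fun j => sub_nonneg.2 (hmin _)
  have hs_nonneg : ∀ j : ℕ, 0 ≤ s j := by
    intro j
    rcases Nat.eq_zero_or_pos j with h | h
    · rw [h, hs0]
    · exact (hs_pos j h).le
  -- definitions
  set t : ℕ → ℝ := fun j => ((j:ℝ) - 1) / (α - 1) with ht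
  set bb : ℕ → ℝ := fun j => η * s j / 2 with hbbdef
  set z : ℕ → H := fun j => x (j-1) + t j • (x j - x (j-1))
    + (t j * bb (j-1)) • (f' (x (j-1)) + Mx (j-1)) with hz
  set E : ℕ → ℝ := fun j => s (j-1) * (t j * (t j - 1)) * (f (x j) - f xstar)
    + 1/2 * ‖z j - xstar‖^2 with hE
  set K0 : ℕ := ⌈2*α⌉₊ with hK0
  have hK0cast : 2*α ≤ (K0:ℝ) := Nat.le_ceil _
  have hK02 : 2 ≤ K0 := by
    have h6 : (2:ℝ) ≤ (K0:ℝ) := by linarith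
    exact_mod_cast h6
  have hbb_eq : ∀ j, 1 ≤ j → β j * Real.sqrt (s j) = bb j := by
    intro j hj
    have hms := Real.mul_self_sqrt (hs_nonneg j)
    rw [hβ j hj]
    simp only [hbbdef]
    linear_combination (η/2) * hms
  have hbb_nonneg : ∀ j, 0 ≤ bb j := by
    intro j
    simp only [hbbdef]
    have := hs_nonneg j
    positivity
  have hbb_le : ∀ j, bb j ≤ s j / 2 := by
    intro j
    simp only [hbbdef]
    nlinarith [hs_nonneg j]
  have htk1 : ∀ k : ℕ, t (k+1) = (k:ℝ) / (α - 1) := by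
    intro k
    simp only [ht]
    push_cast
    ring
  have hcastK : ∀ k : ℕ, K0 ≤ k → 2*α ≤ (k:ℝ) := by
    intro k hk
    exact le_trans hK0cast (by exact_mod_cast hk)
  have htpos : ∀ j, K0 ≤ j → 1 ≤ t j := by
    intro j hj
    have hc := hcastK j hj
    simp only [ht]
    rw [le_div_iff₀ hα1]
    linarith
  have hT2 : ∀ k, K0 ≤ k → 2 ≤ t (k+1) := by
    intro k hk
    have hc := hcastK k hk
    rw [htk1, le_div_iff₀ hα1]
    linarith
  have ht_nonneg : ∀ k : ℕ, 0 ≤ t (k+1) := by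
    intro k
    rw [htk1]
    positivity
  -- z identities
  have hzk1form : ∀ k : ℕ, z (k+1) = x k + t (k+1) • (x (k+1) - x k)
      + (t (k+1) * bb k) • (f' (x k) + Mx k) := by
    intro k
    simp only [hz, Nat.add_sub_cancel]
  have hzkform : ∀ k, K0 ≤ k → z k = t (k+1) • y k - (t (k+1) - 1) • x k
      + (t (k+1) * bb k) • (f' (x k) + Mx k) := by
    intro k hk
    have hk2 : 2 ≤ k := le_trans hK02 hk
    have hk1 : 1 ≤ k := by omega
    have hkm1 : 1 ≤ k - 1 := by omega
    have hyk := hy k hk1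
    rw [hbb_eq k hk1, hbb_eq (k-1) hkm1] at hyk
    have hkne : ((k:ℝ)) ≠ 0 := Nat.cast_ne_zero.2 (by omega)
    simp only [hz]
    rw [hyk]
    simp only [ht]
    match_scalars
    all_goals push_cast
    all_goals field_simp
    all_goals ring
  -- per-step energy inequality
  have hstepE : ∀ k, K0 ≤ k →
      E (k+1) + s k * t (k+1) * (f (x (k+1)) - f xstar)
      ≤ E k + s k * (t (k+1) * (t (k+1) - 1) - t k * (t k - 1)) * (f (x k) - f xstar)
        + s k * t (k+1) * ‖My k‖ * Real.sqrt (2 * E (k+1))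
        + s k * t (k+1)^2 * bb k / 2 * ‖Mx k‖^2 := by
    intro k hk
    have hk2 : 2 ≤ k := le_trans hK02 hk
    have hk1 : 1 ≤ k := by omega
    have hS0 : 0 < s k := hs_pos k hk1
    have hSL : s k * L ≤ 1 := by
      have h1 := hs_le k hk1
      calc s k * L ≤ (1/L) * L := by nlinarith
        _ = 1 := by field_simp
    have hstepP := step_ineq f f' L hL hdiff hlip hstrong hdes xstar hstar0
      (s k) (t (k+1)) (bb k) (x k) (x (k+1)) (y k) (Mx k) (My k) (z k) (z (k+1))
      hS0 hSL (hbb_nonneg k) (hbb_le k) (hT2 k hk) (hx k hk1) (hzk1form k)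
      (hzkform k hk)
    have hEk1 : E (k+1) = s k * (t (k+1) * (t (k+1) - 1)) * (f (x (k+1)) - f xstar)
        + 1/2 * ‖z (k+1) - xstar‖^2 := by
      simp only [hE, Nat.add_sub_cancel]
    have hEk : E k = s (k-1) * (t k * (t k - 1)) * (f (x k) - f xstar)
        + 1/2 * ‖z k - xstar‖^2 := by
      simp only [hE]
    have hsd : s k ≤ s (k-1) := by
      have := hs_dec (k-1) (by omega)
      rwa [Nat.sub_add_cancel (by omega : 1 ≤ k)] at this
    have htk : 1 ≤ t k := htpos k hk
    have cE : s k * ((t k * (t k - 1)) * (f (x k) - f xstar))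
        ≤ s (k-1) * ((t k * (t k - 1)) * (f (x k) - f xstar)) :=
      mul_le_mul_of_nonneg_right hsd
        (mul_nonneg (mul_nonneg (by linarith) (by linarith)) (hδ k))
    have hEnn1 : 0 ≤ E (k+1) := by
      rw [hEk1]
      have hTk1 := hT2 k hk
      have h1 : 0 ≤ s k * (t (k+1) * (t (k+1) - 1)) * (f (x (k+1)) - f xstar) :=
        mul_nonneg (mul_nonneg hS0.le
          (mul_nonneg (by linarith) (by linarith))) (hδ (k+1))
      positivity
    have hnormle : ‖z (k+1) - xstar‖ ≤ Real.sqrt (2 * E (k+1)) := by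
      have h1 : ‖z (k+1) - xstar‖^2 ≤ 2 * E (k+1) := by
        rw [hEk1]
        have hTk1 := hT2 k hk
        have h2 : 0 ≤ s k * (t (k+1) * (t (k+1) - 1)) * (f (x (k+1)) - f xstar) :=
          mul_nonneg (mul_nonneg hS0.le
            (mul_nonneg (by linarith) (by linarith))) (hδ (k+1))
        linarith
      calc ‖z (k+1) - xstar‖ = Real.sqrt (‖z (k+1) - xstar‖^2) :=
            (Real.sqrt_sq (norm_nonneg _)).symm
        _ ≤ Real.sqrt (2 * E (k+1)) := Real.sqrt_le_sqrt h1
    have cMy : s k * t (k+1) * ‖My k‖ * ‖z (k+1) - xstar‖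
        ≤ s k * t (k+1) * ‖My k‖ * Real.sqrt (2 * E (k+1)) :=
      mul_le_mul_of_nonneg_left hnormle
        (mul_nonneg (mul_nonneg hS0.le (ht_nonneg k)) (norm_nonneg _))
    nlinarith [hstepP, hEk1, hEk, cE, cMy]

  -- coefficient identity and constants
  set μ : ℝ := (α-3)/(α-1)^2 with hμdef
  have hμpos : 0 < μ := by
    rw [hμdef]
    exact div_pos (by linarith) (by positivity)
  have hid : ∀ j : ℕ, (t (j+1) * (t (j+1) - 1) - t j * (t j - 1))
      = t j - μ * (j:ℝ) - 1/(α-1)^2 := by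
    intro j
    simp only [ht, hμdef]
    push_cast
    field_simp
    ring
  set C0 : ℝ := s K0 * (t (K0+1) * (t (K0+1) - 1) - t K0 * (t K0 - 1))
    * (f (x K0) - f xstar) with hC0def
  -- the summed (telescoped) inequality
  have hQ : ∀ N, K0 ≤ N →
      E (N+1) + s N * t (N+1) * (f (x (N+1)) - f xstar)
        + μ * ∑ j ∈ Finset.Ico (K0+1) (N+1), s j * (j:ℝ) * (f (x j) - f xstar)
      ≤ E K0 + C0 + ∑ k ∈ Finset.Ico K0 (N+1),
          (s k * t (k+1) * ‖My k‖ * Real.sqrt (2 * E (k+1))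
            + s k * t (k+1)^2 * bb k / 2 * ‖Mx k‖^2) := by
    intro N hN
    induction N, hN using Nat.le_induction with
    | base =>
      have h1 := hstepE K0 le_rfl
      rw [Finset.Ico_self, Finset.sum_empty]
      rw [show Finset.Ico K0 (K0+1) = {K0} by rw [Finset.Ico_add_one_right_eq_Icc, Finset.Icc_self]]
      rw [Finset.sum_singleton, hC0def]
      linarith
    | succ N hKN ih =>
      have h1 := hstepE (N+1) (by omega)
      rw [hid (N+1)] at h1
      have hsum1 : ∑ j ∈ Finset.Ico (K0+1) (N+1+1), s j * (j:ℝ) * (f (x j) - f xstar)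
          = (∑ j ∈ Finset.Ico (K0+1) (N+1), s j * (j:ℝ) * (f (x j) - f xstar))
            + s (N+1) * ((N+1:ℕ):ℝ) * (f (x (N+1)) - f xstar) :=
        Finset.sum_Ico_succ_top (by omega) _
      have hsum2 : ∑ k ∈ Finset.Ico K0 (N+1+1),
            (s k * t (k+1) * ‖My k‖ * Real.sqrt (2 * E (k+1))
              + s k * t (k+1)^2 * bb k / 2 * ‖Mx k‖^2)
          = (∑ k ∈ Finset.Ico K0 (N+1),
              (s k * t (k+1) * ‖My k‖ * Real.sqrt (2 * E (k+1))
                + s k * t (k+1)^2 * bb k / 2 * ‖Mx k‖^2))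
            + (s (N+1) * t (N+1+1) * ‖My (N+1)‖ * Real.sqrt (2 * E (N+1+1))
                + s (N+1) * t (N+1+1)^2 * bb (N+1) / 2 * ‖Mx (N+1)‖^2) :=
        Finset.sum_Ico_succ_top (by omega) _
      have hδ' := hδ (N+1)
      have hsd : s (N+1) ≤ s N := hs_dec N (by omega)
      have hsnn : 0 ≤ s (N+1) := hs_nonneg _
      have htnn : 1 ≤ t (N+1) := htpos (N+1) (by omega)
      have hia : 0 ≤ 1/(α-1)^2 := by positivity
      have p1 : 0 ≤ (s N - s (N+1)) * (t (N+1) * (f (x (N+1)) - f xstar)) :=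
        mul_nonneg (by linarith) (mul_nonneg (by linarith) hδ')
      have p2 : 0 ≤ s (N+1) * ((1/(α-1)^2) * (f (x (N+1)) - f xstar)) :=
        mul_nonneg hsnn (mul_nonneg hia hδ')
      rw [hsum1, hsum2]
      nlinarith [h1, ih, p1, p2]
  -- error-sum bounds
  set Ry : ℝ := ∑' k, s k * (k:ℝ) * ‖My k‖ with hRy
  set Rx : ℝ := ∑' k, s k * (k:ℝ) * ‖Mx k‖ with hRx
  have hqy_nn : ∀ k : ℕ, 0 ≤ s k * (k:ℝ) * ‖My k‖ := fun k =>
    mul_nonneg (mul_nonneg (hs_nonneg k) (Nat.cast_nonneg k)) (norm_nonneg _)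
  have hqx_nn : ∀ k : ℕ, 0 ≤ s k * (k:ℝ) * ‖Mx k‖ := fun k =>
    mul_nonneg (mul_nonneg (hs_nonneg k) (Nat.cast_nonneg k)) (norm_nonneg _)
  have hRynn : 0 ≤ Ry := tsum_nonneg hqy_nn
  have hRxnn : 0 ≤ Rx := tsum_nonneg hqx_nn
  set A : ℝ := (1/(α-1)) * Ry with hAdef
  have hAnn : 0 ≤ A := by
    rw [hAdef]
    have : 0 ≤ 1/(α-1) := by positivity
    exact mul_nonneg this hRynn
  have hAbound : ∀ N : ℕ, ∑ k ∈ Finset.Ico K0 (N+1), s k * t (k+1) * ‖My k‖ ≤ A := by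
    intro N
    have h1 : ∀ k ∈ Finset.Ico K0 (N+1), s k * t (k+1) * ‖My k‖
        = (1/(α-1)) * (s k * (k:ℝ) * ‖My k‖) := by
      intro k _
      rw [htk1 k]
      ring
    rw [Finset.sum_congr rfl h1, ← Finset.mul_sum]
    have h2 : ∑ k ∈ Finset.Ico K0 (N+1), s k * (k:ℝ) * ‖My k‖ ≤ Ry :=
      Summable.sum_le_tsum _ (fun k _ => hqy_nn k) hJ0y
    have h3 : (0:ℝ) ≤ 1/(α-1) := by positivity
    rw [hAdef]
    exact mul_le_mul_of_nonneg_left h2 h3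
  set D : ℝ := (η/(4*(α-1)^2)) * (Rx * Rx) with hDdef
  have hDnn : 0 ≤ D := by
    rw [hDdef]
    have : (0:ℝ) ≤ η/(4*(α-1)^2) := by positivity
    exact mul_nonneg this (mul_nonneg hRxnn hRxnn)
  have hDbound : ∀ N : ℕ, ∑ k ∈ Finset.Ico K0 (N+1),
      s k * t (k+1)^2 * bb k / 2 * ‖Mx k‖^2 ≤ D := by
    intro N
    have h1 : ∀ k ∈ Finset.Ico K0 (N+1), s k * t (k+1)^2 * bb k / 2 * ‖Mx k‖^2
        ≤ (η/(4*(α-1)^2)) * Rx * (s k * (k:ℝ) * ‖Mx k‖) := by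
      intro k _
      have hqk : s k * (k:ℝ) * ‖Mx k‖ ≤ Rx :=
        Summable.le_tsum hJ0x k (fun j _ => hqx_nn j)
      have heq : s k * t (k+1)^2 * bb k / 2 * ‖Mx k‖^2
          = (η/(4*(α-1)^2)) * ((s k * (k:ℝ) * ‖Mx k‖)^2) := by
        rw [htk1 k]
        simp only [hbbdef]
        field_simp
        ring
      rw [heq]
      have h2 : (s k * (k:ℝ) * ‖Mx k‖)^2 ≤ Rx * (s k * (k:ℝ) * ‖Mx k‖) := by
        nlinarith [hqx_nn k, hqk]
      calc (η/(4*(α-1)^2)) * ((s k * (k:ℝ) * ‖Mx k‖)^2)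
          ≤ (η/(4*(α-1)^2)) * (Rx * (s k * (k:ℝ) * ‖Mx k‖)) :=
            mul_le_mul_of_nonneg_left h2 (by positivity)
        _ = (η/(4*(α-1)^2)) * Rx * (s k * (k:ℝ) * ‖Mx k‖) := by ring
    calc ∑ k ∈ Finset.Ico K0 (N+1), s k * t (k+1)^2 * bb k / 2 * ‖Mx k‖^2
        ≤ ∑ k ∈ Finset.Ico K0 (N+1),
            (η/(4*(α-1)^2)) * Rx * (s k * (k:ℝ) * ‖Mx k‖) := Finset.sum_le_sum h1
      _ = (η/(4*(α-1)^2)) * Rx * ∑ k ∈ Finset.Ico K0 (N+1), s k * (k:ℝ) * ‖Mx k‖ := by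
          rw [Finset.mul_sum]
      _ ≤ (η/(4*(α-1)^2)) * Rx * Rx := by
          apply mul_le_mul_of_nonneg_left
            (Summable.sum_le_tsum _ (fun k _ => hqx_nn k) hJ0x)
          positivity
      _ = D := by rw [hDdef]; ring
  have hEnnK : ∀ j, K0 ≤ j → 0 ≤ E j := by
    intro j hj
    simp only [hE]
    have h1 : 1 ≤ t j := htpos j hj
    have h2 : 0 ≤ s (j-1) * (t j * (t j - 1)) * (f (x j) - f xstar) :=
      mul_nonneg (mul_nonneg (hs_nonneg _)
        (mul_nonneg (by linarith) (by linarith))) (hδ j)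
    positivity
  have hc2K0 : 0 ≤ t (K0+1) * (t (K0+1) - 1) - t K0 * (t K0 - 1) := by
    have h1 : 1 ≤ t K0 := htpos K0 le_rfl
    have hmono : t K0 ≤ t (K0+1) := by
      simp only [ht]
      rw [div_le_div_iff₀ hα1 hα1]
      push_cast
      nlinarith
    nlinarith [hmono, h1]
  have hC0nn : 0 ≤ C0 := by
    rw [hC0def]
    exact mul_nonneg (mul_nonneg (hs_nonneg K0) hc2K0) (hδ K0)
  set C1 : ℝ := E K0 + C0 + D with hC1def
  have hC1nn : 0 ≤ C1 := by
    rw [hC1def]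
    have := hEnnK K0 le_rfl
    linarith
  -- uniform bound on the energy via the Gronwall lemma
  have hgronh : ∀ N, K0 ≤ N → E (N+1) ≤ C1 + ∑ k ∈ Finset.Ico K0 (N+1),
      s k * t (k+1) * ‖My k‖ * Real.sqrt (2 * E (k+1)) := by
    intro N hN
    have hq := hQ N hN
    have hmuSum : 0 ≤ μ * ∑ j ∈ Finset.Ico (K0+1) (N+1),
        s j * (j:ℝ) * (f (x j) - f xstar) :=
      mul_nonneg hμpos.le (Finset.sum_nonneg fun j _ =>
        mul_nonneg (mul_nonneg (hs_nonneg j) (Nat.cast_nonneg j)) (hδ j))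
    have hsnn : 0 ≤ s N * t (N+1) * (f (x (N+1)) - f xstar) :=
      mul_nonneg (mul_nonneg (hs_nonneg N) (ht_nonneg N)) (hδ _)
    have hsplit : ∑ k ∈ Finset.Ico K0 (N+1),
          (s k * t (k+1) * ‖My k‖ * Real.sqrt (2 * E (k+1))
            + s k * t (k+1)^2 * bb k / 2 * ‖Mx k‖^2)
        = (∑ k ∈ Finset.Ico K0 (N+1),
            s k * t (k+1) * ‖My k‖ * Real.sqrt (2 * E (k+1)))
          + ∑ k ∈ Finset.Ico K0 (N+1), s k * t (k+1)^2 * bb k / 2 * ‖Mx k‖^2 :=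
      Finset.sum_add_distrib
    have hd := hDbound N
    rw [hsplit] at hq
    rw [hC1def]
    set S1 : ℝ := ∑ k ∈ Finset.Ico K0 (N+1),
      s k * t (k+1) * ‖My k‖ * Real.sqrt (2 * E (k+1)) with hS1
    set S2 : ℝ := ∑ k ∈ Finset.Ico K0 (N+1),
      s k * t (k+1)^2 * bb k / 2 * ‖Mx k‖^2 with hS2
    linarith
  have hgron := sqrt_gronwall E (fun k => s k * t (k+1) * ‖My k‖) K0 C1 A hC1nn
    (fun k => mul_nonneg (mul_nonneg (hs_nonneg k) (ht_nonneg k)) (norm_nonneg _))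
    hAbound hgronh
  set BB : ℝ := (Real.sqrt C1 + Real.sqrt 2 * A)^2 with hBBdef
  -- final uniform bound on partial sums
  have hfinal : ∀ N, K0 ≤ N →
      μ * ∑ j ∈ Finset.Ico (K0+1) (N+1), s j * (j:ℝ) * (f (x j) - f xstar)
      ≤ C1 + Real.sqrt (2*BB) * A := by
    intro N hN
    have hq := hQ N hN
    have h3 : ∀ k ∈ Finset.Ico K0 (N+1),
        s k * t (k+1) * ‖My k‖ * Real.sqrt (2 * E (k+1))
          + s k * t (k+1)^2 * bb k / 2 * ‖Mx k‖^2
        ≤ Real.sqrt (2*BB) * (s k * t (k+1) * ‖My k‖)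
          + s k * t (k+1)^2 * bb k / 2 * ‖Mx k‖^2 := by
      intro k hkmem
      have hkK : K0 ≤ k := (Finset.mem_Ico.1 hkmem).1
      have hEb := hgron k hkK
      have h4 : Real.sqrt (2 * E (k+1)) ≤ Real.sqrt (2*BB) := by
        apply Real.sqrt_le_sqrt
        rw [hBBdef]
        linarith
      have h5 : s k * t (k+1) * ‖My k‖ * Real.sqrt (2 * E (k+1))
          ≤ s k * t (k+1) * ‖My k‖ * Real.sqrt (2*BB) :=
        mul_le_mul_of_nonneg_left h4
          (mul_nonneg (mul_nonneg (hs_nonneg k) (ht_nonneg k)) (norm_nonneg _))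
      nlinarith [h5]
    have h6 : ∑ k ∈ Finset.Ico K0 (N+1),
          (s k * t (k+1) * ‖My k‖ * Real.sqrt (2 * E (k+1))
            + s k * t (k+1)^2 * bb k / 2 * ‖Mx k‖^2)
        ≤ ∑ k ∈ Finset.Ico K0 (N+1),
          (Real.sqrt (2*BB) * (s k * t (k+1) * ‖My k‖)
            + s k * t (k+1)^2 * bb k / 2 * ‖Mx k‖^2) := Finset.sum_le_sum h3
    have h7 : ∑ k ∈ Finset.Ico K0 (N+1),
          (Real.sqrt (2*BB) * (s k * t (k+1) * ‖My k‖)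
            + s k * t (k+1)^2 * bb k / 2 * ‖Mx k‖^2)
        = Real.sqrt (2*BB) * (∑ k ∈ Finset.Ico K0 (N+1), s k * t (k+1) * ‖My k‖)
          + ∑ k ∈ Finset.Ico K0 (N+1), s k * t (k+1)^2 * bb k / 2 * ‖Mx k‖^2 := by
      rw [Finset.mul_sum, ← Finset.sum_add_distrib]
    have h8 : Real.sqrt (2*BB) * (∑ k ∈ Finset.Ico K0 (N+1), s k * t (k+1) * ‖My k‖)
        ≤ Real.sqrt (2*BB) * A :=
      mul_le_mul_of_nonneg_left (hAbound N) (Real.sqrt_nonneg _)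
    have h9 := hDbound N
    have hEnn' : 0 ≤ E (N+1) := hEnnK (N+1) (by omega)
    have hsnn : 0 ≤ s N * t (N+1) * (f (x (N+1)) - f xstar) :=
      mul_nonneg (mul_nonneg (hs_nonneg N) (ht_nonneg N)) (hδ _)
    rw [hC1def]
    rw [h7] at h6
    set S0 : ℝ := ∑ j ∈ Finset.Ico (K0+1) (N+1), s j * (j:ℝ) * (f (x j) - f xstar)
      with hS0
    set S1 : ℝ := ∑ k ∈ Finset.Ico K0 (N+1),
      (s k * t (k+1) * ‖My k‖ * Real.sqrt (2 * E (k+1))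
        + s k * t (k+1)^2 * bb k / 2 * ‖Mx k‖^2) with hS1
    set S2 : ℝ := ∑ k ∈ Finset.Ico K0 (N+1), s k * t (k+1) * ‖My k‖ with hS2
    set S3 : ℝ := ∑ k ∈ Finset.Ico K0 (N+1),
      s k * t (k+1)^2 * bb k / 2 * ‖Mx k‖^2 with hS3
    linarith
  -- conclude summability
  have hterm_nn : ∀ j : ℕ, 0 ≤ s j * (j:ℝ) * (f (x j) - f xstar) := fun j =>
    mul_nonneg (mul_nonneg (hs_nonneg j) (Nat.cast_nonneg j)) (hδ j)
  have hCrem_nn : 0 ≤ (C1 + Real.sqrt (2*BB) * A)/μ := by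
    apply div_nonneg _ hμpos.le
    have := Real.sqrt_nonneg (2*BB)
    nlinarith [mul_nonneg (Real.sqrt_nonneg (2*BB)) hAnn]
  apply summable_of_sum_range_le (c := (∑ j ∈ Finset.range (K0+1),
      s j * (j:ℝ) * (f (x j) - f xstar)) + (C1 + Real.sqrt (2*BB) * A)/μ) hterm_nn
  intro n
  rcases le_or_gt n (K0+1) with hsmall | hbig
  · have hsubset : Finset.range n ⊆ Finset.range (K0+1) := Finset.range_subset_range.2 hsmall
    have h1 := Finset.sum_le_sum_of_subset_of_nonneg hsubset
      (fun j _ _ => hterm_nn j)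
    linarith
  · obtain ⟨N, rfl⟩ : ∃ N, n = N+1 := ⟨n-1, by omega⟩
    have hNK : K0 ≤ N := by omega
    have h1 : (∑ j ∈ Finset.range (K0+1), s j * (j:ℝ) * (f (x j) - f xstar))
        + ∑ j ∈ Finset.Ico (K0+1) (N+1), s j * (j:ℝ) * (f (x j) - f xstar)
        = ∑ j ∈ Finset.range (N+1), s j * (j:ℝ) * (f (x j) - f xstar) :=
      Finset.sum_range_add_sum_Ico _ (by omega)
    have h2 := hfinal N hNK
    have h3 : ∑ j ∈ Finset.Ico (K0+1) (N+1), s j * (j:ℝ) * (f (x j) - f xstar)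
        ≤ (C1 + Real.sqrt (2*BB) * A)/μ := by
      rw [le_div_iff₀ hμpos]
      linarith
    linarith [h1, h3]
end

section
/- (Extended descent lemma) Let g : H → ℝ be a convex Fréchet differentiable function whose gradient ∇g is L-Lipschitz continuous, and let s ∈ [0, 1/L]. Then for all x, y ∈ H: g(y − s ∇g(y)) ≤ g(x) + ⟨∇g(y), y − x⟩ − (s/2) ‖∇g(y)‖² − (s/2) ‖∇g(x) − ∇g(y)‖². -/
set_option autoImplicit false
open scoped RealInnerProductSpace

section aux
variable {H : Type*} [NormedAddCommGroup H] [InnerProductSpace ℝ H] [CompleteSpace H]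

private lemma edl_deriv_line (g : H → ℝ) (g' : H → H) (hdiff : ∀ z, HasGradientAt g (g' z) z)
    (a b : H) (t : ℝ) :
    HasDerivAt (fun t : ℝ => g (t • (b - a) + a)) ⟪g' (t • (b - a) + a), b - a⟫ t := by
  have hγ : HasDerivAt (fun t : ℝ => t • (b - a) + a) (b - a) t := by
    simpa using ((hasDerivAt_id t).smul_const (b - a)).add_const a
  have hf : HasFDerivAt g (InnerProductSpace.toDual ℝ H (g' (t • (b - a) + a)))
      (t • (b - a) + a) := hasGradientAt_iff_hasFDerivAt.mp (hdiff _)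
  simpa [InnerProductSpace.toDual_apply_apply, Function.comp_def] using hf.comp_hasDerivAt t hγ

private lemma edl_convex_ineq (g : H → ℝ) (g' : H → H)
    (hconv : ConvexOn ℝ Set.univ g) (hdiff : ∀ z, HasGradientAt g (g' z) z)
    (a b : H) : g a + ⟪g' a, b - a⟫ ≤ g b := by
  have hcn : ConvexOn ℝ Set.univ (fun t : ℝ => g (t • (b - a) + a)) := by
    have := hconv.comp_affineMap (AffineMap.lineMap a b : ℝ →ᵃ[ℝ] H)
    simp only [Set.preimage_univ] at this
    have e : (fun t : ℝ => g (t • (b - a) + a)) = g ∘ AffineMap.lineMap a b := by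
      funext t; simp [AffineMap.lineMap_apply]
    rw [e]; exact this

  have key := hcn.le_slope_of_hasDerivAt (Set.mem_univ (0:ℝ)) (Set.mem_univ (1:ℝ))
    zero_lt_one (edl_deriv_line g g' hdiff a b 0)
  simp only [slope_def_field] at key
  norm_num at key
  linarith [key]

private lemma edl_descent (g : H → ℝ) (g' : H → H) (L : ℝ) (hL : 0 < L)
    (hdiff : ∀ z, HasGradientAt g (g' z) z)
    (hlip : ∀ z w, ‖g' z - g' w‖ ≤ L * ‖z - w‖)
    (a b : H) : g b ≤ g a + ⟪g' a, b - a⟫ + L / 2 * ‖b - a‖ ^ 2 := by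
  set c1 : ℝ := ⟪g' a, b - a⟫ with hc1
  set c2 : ℝ := ‖b - a‖ ^ 2 with hc2
  set k : ℝ → ℝ := fun t => g (t • (b - a) + a) - t * c1 - L / 2 * t ^ 2 * c2 with hk
  have hkd : ∀ t : ℝ, HasDerivAt k
      (⟪g' (t • (b - a) + a), b - a⟫ - c1 - L / 2 * (2 * t) * c2) t := by
    intro t
    have hp : HasDerivAt (fun t : ℝ => L / 2 * t ^ 2 * c2) (L / 2 * (2 * t) * c2) t := by
      have : HasDerivAt (fun t : ℝ => t ^ 2) (2 * t) t := by simpa using hasDerivAt_pow 2 t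
      simpa [mul_comm, mul_assoc, mul_left_comm] using (this.const_mul (L/2)).mul_const c2
    exact ((edl_deriv_line g g' hdiff a b t).sub (hasDerivAt_mul_const c1)).sub hp
  have hanti : AntitoneOn k (Set.Icc 0 1) := by
    apply antitoneOn_of_deriv_nonpos (convex_Icc 0 1)
    · exact fun t _ => (hkd t).continuousAt.continuousWithinAt
    · exact fun t _ => (hkd t).differentiableAt.differentiableWithinAt
    · intro t ht
      rw [interior_Icc, Set.mem_Ioo] at ht
      rw [(hkd t).deriv]
      have h1 : ⟪g' (t • (b - a) + a) - g' a, b - a⟫ ≤ ‖g' (t • (b - a) + a) - g' a‖ * ‖b - a‖ :=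
        real_inner_le_norm _ _
      have h2 : ‖g' (t • (b - a) + a) - g' a‖ ≤ L * (t * ‖b - a‖) := by
        have := hlip (t • (b - a) + a) a
        rwa [add_sub_cancel_right, norm_smul, Real.norm_eq_abs, abs_of_pos ht.1] at this
      have h3 : ⟪g' (t • (b - a) + a), b - a⟫ - c1 = ⟪g' (t • (b - a) + a) - g' a, b - a⟫ := by
        rw [inner_sub_left]
      have hn : (0:ℝ) ≤ ‖b - a‖ := norm_nonneg _
      have h4 : L / 2 * (2 * t) * c2 = L * (t * ‖b - a‖) * ‖b - a‖ := by rw [hc2]; ring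
      have h5 := le_trans h1 (mul_le_mul_of_nonneg_right h2 hn)
      linarith [h3, h4, h5]
  have hk10 : k 1 ≤ k 0 := hanti (by norm_num) (by norm_num) zero_le_one
  have e0 : k 0 = g a := by simp [hk]
  have e1 : k 1 = g b - c1 - L / 2 * c2 := by
    rw [hk]
    simp only [one_smul, sub_add_cancel, one_pow, one_mul, mul_one]
  rw [e0, e1] at hk10
  linarith

private lemma edl_coco (g : H → ℝ) (g' : H → H) (L : ℝ) (hL : 0 < L)
    (hconv : ConvexOn ℝ Set.univ g)
    (hdiff : ∀ z, HasGradientAt g (g' z) z)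
    (hlip : ∀ z w, ‖g' z - g' w‖ ≤ L * ‖z - w‖)
    (a b : H) : g a + ⟪g' a, b - a⟫ + 1 / (2 * L) * ‖g' b - g' a‖ ^ 2 ≤ g b := by
  set c : H := g' a with hc
  set φ : H → ℝ := fun z => g z - ⟪c, z⟫ with hφ
  set φ' : H → H := fun z => g' z - c with hφ'
  have hφconv : ConvexOn ℝ Set.univ φ := by
    have h2 : ConcaveOn ℝ Set.univ (fun z : H => ⟪c, z⟫) :=
      (innerSL ℝ c).toLinearMap.concaveOn convex_univ
    exact hconv.sub h2
  have hφdiff : ∀ z, HasGradientAt φ (φ' z) z := by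
    intro z
    rw [hφ', hasGradientAt_iff_hasFDerivAt, map_sub]
    have h1 : HasFDerivAt g (InnerProductSpace.toDual ℝ H (g' z)) z :=
      hasGradientAt_iff_hasFDerivAt.mp (hdiff z)
    have h2 : HasFDerivAt (fun w : H => ⟪c, w⟫)
        ((InnerProductSpace.toDual ℝ H c : H →L[ℝ] ℝ)) z := by
      have := (InnerProductSpace.toDual ℝ H c : H →L[ℝ] ℝ).hasFDerivAt (x := z)
      convert this using 2
      exact InnerProductSpace.toDual_apply_apply.symm
    exact h1.sub h2
  have hφlip : ∀ z w, ‖φ' z - φ' w‖ ≤ L * ‖z - w‖ := by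
    intro z w
    simpa [hφ', sub_sub_sub_cancel_right] using hlip z w
  have hmin : ∀ w, φ a ≤ φ w := by
    intro w
    have h := edl_convex_ineq φ φ' hφconv hφdiff a w
    have : φ' a = 0 := by simp [hφ', hc]
    rw [this, inner_zero_left] at h
    linarith
  have hdesc := edl_descent φ φ' L hL hφdiff hφlip b (b - (1/L) • φ' b)
  have hmb := hmin (b - (1/L) • φ' b)
  have e1 : (b - (1/L) • φ' b) - b = -((1/L) • φ' b) := by abel
  rw [e1] at hdesc
  have e2 : ⟪φ' b, -((1/L) • φ' b)⟫ = -(1/L) * ‖φ' b‖ ^ 2 := by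
    rw [inner_neg_right, real_inner_smul_right, real_inner_self_eq_norm_sq]; ring
  have e3 : ‖-((1/L) • φ' b)‖ ^ 2 = (1/L) ^ 2 * ‖φ' b‖ ^ 2 := by
    rw [norm_neg, norm_smul, mul_pow, Real.norm_eq_abs, sq_abs]
  rw [e2, e3] at hdesc
  have key : φ a ≤ φ b - 1 / (2 * L) * ‖φ' b‖ ^ 2 := by
    have hLne : L ≠ 0 := ne_of_gt hL
    have : L / 2 * ((1/L) ^ 2 * ‖φ' b‖ ^ 2) - (1/L) * ‖φ' b‖ ^ 2
        = - (1 / (2 * L) * ‖φ' b‖ ^ 2) := by field_simp; ring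
    nlinarith [hdesc, hmb]
  have eφa : φ a = g a - ⟪c, a⟫ := rfl
  have eφb : φ b = g b - ⟪c, b⟫ := rfl
  have eφ'b : φ' b = g' b - g' a := rfl
  have einner : ⟪g' a, b - a⟫ = ⟪c, b⟫ - ⟪c, a⟫ := by rw [hc, inner_sub_right]
  rw [eφa, eφb, eφ'b] at key
  rw [einner]
  linarith

end aux

/-- Extended descent lemma: for a convex differentiable function `g` on a real Hilbert
space with `L`-Lipschitz gradient `g'`, and any step-size `s ∈ [0, 1/L]`, we have
`g(y − s ∇g(y)) ≤ g(x) + ⟨∇g(y), y − x⟩ − (s/2)‖∇g(y)‖² − (s/2)‖∇g(x) − ∇g(y)‖²`. -/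
theorem extended_descent_lemma
    {H : Type*} [NormedAddCommGroup H] [InnerProductSpace ℝ H] [CompleteSpace H]
    (g : H → ℝ) (g' : H → H) (L : ℝ) (hL : 0 < L)
    (hconv : ConvexOn ℝ Set.univ g)
    (hdiff : ∀ z, HasGradientAt g (g' z) z)
    (hlip : ∀ z w, ‖g' z - g' w‖ ≤ L * ‖z - w‖)
    (s : ℝ) (hs0 : 0 ≤ s) (hs1 : s ≤ 1 / L) :
    ∀ x y : H, g (y - s • g' y) ≤
      g x + ⟪g' y, y - x⟫ - s / 2 * ‖g' y‖ ^ 2 - s / 2 * ‖g' x - g' y‖ ^ 2 := by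
  intro x y
  set A : ℝ := ‖g' y‖ ^ 2 with hA
  set B : ℝ := ‖g' x - g' y‖ ^ 2 with hB
  have hA0 : 0 ≤ A := by positivity
  have hB0 : 0 ≤ B := by positivity
  have hsL : s * L ≤ 1 := by
    rw [le_div_iff₀ hL] at hs1; linarith
  have h1 := edl_descent g g' L hL hdiff hlip y (y - s • g' y)
  have e1 : (y - s • g' y) - y = -(s • g' y) := by abel
  rw [e1] at h1
  have e2 : ⟪g' y, -(s • g' y)⟫ = -s * A := by
    rw [inner_neg_right, real_inner_smul_right, real_inner_self_eq_norm_sq, hA]; ring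
  have e3 : ‖-(s • g' y)‖ ^ 2 = s ^ 2 * A := by
    rw [norm_neg, norm_smul, mul_pow, Real.norm_eq_abs, sq_abs, hA]
  rw [e2, e3] at h1
  have h2 := edl_coco g g' L hL hconv hdiff hlip y x
  rw [← hB] at h2
  have e4 : ⟪g' y, x - y⟫ = -⟪g' y, y - x⟫ := by
    rw [← inner_neg_right, neg_sub]
  rw [e4] at h2
  have key1 : L / 2 * (s ^ 2 * A) ≤ s / 2 * A := by
    nlinarith [mul_nonneg (mul_nonneg (sub_nonneg.mpr hsL) hs0) hA0]
  have key2 : s / 2 * B ≤ 1 / (2 * L) * B := by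
    have h : s / 2 ≤ 1 / (2 * L) := by
      have : 1 / (2 * L) = (1 / L) / 2 := by ring
      rw [this]; linarith
    exact mul_le_mul_of_nonneg_right h hB0
  linarith [h1, h2, key1, key2]
end

section
/- Let α > 1 and let (a_k) and (ω_k) be sequences of nonnegative real numbers such that a_{k+1} ≤ (1 − α/k) a_k + ω_k for all k ≥ 1. If Σ_{k≥1} k ω_k < ∞, then Σ_{k≥1} a_k < ∞ and k a_k → 0 as k → ∞ (i.e., a_k = o(1/k)). -/
set_option autoImplicit false

open Filter

/-- If `α > 1`, `(a_k)`, `(ω_k)` are nonnegative with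
`a_{k+1} ≤ (1 − α/k) a_k + ω_k` for all `k ≥ 1` and `Σ k ω_k < ∞`,
then `Σ a_k < ∞` and `k a_k → 0`. -/
theorem summable_and_little_o_of_recursive
    (α : ℝ) (hα : 1 < α) (a ω : ℕ → ℝ)
    (ha : ∀ k, 0 ≤ a k) (hω : ∀ k, 0 ≤ ω k)
    (hrec : ∀ k, 1 ≤ k → a (k + 1) ≤ (1 - α / (k : ℝ)) * a k + ω k)
    (hsum : Summable fun k : ℕ => (k : ℝ) * ω k) :
    Summable a ∧ Tendsto (fun k : ℕ => (k : ℝ) * a k) atTop (nhds 0) := by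
  have hα0 : (0:ℝ) < α - 1 := by linarith
  -- shifted weight sequence is summable
  have hsum1 : Summable fun k : ℕ => ((k:ℝ)+1) * ω (k+1) := by
    have := (summable_nat_add_iff 1).mpr hsum
    simpa [Nat.cast_add, Nat.cast_one] using this
  -- key partial-sum estimate
  have key : ∀ N : ℕ, (α - 1) * (∑ k ∈ Finset.range N, a (k+1)) + (N:ℝ) * a (N+1)
      ≤ ∑ k ∈ Finset.range N, ((k:ℝ)+1) * ω (k+1) := by
    intro N
    induction N with
    | zero => simp
    | succ N ih =>
      have h1 := hrec (N+1) (by omega)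
      have hpos : (0:ℝ) < (N:ℝ) + 1 := by positivity
      have h2 : ((N:ℝ)+1) * a (N+2) ≤ ((N:ℝ)+1-α) * a (N+1) + ((N:ℝ)+1) * ω (N+1) := by
        have h1' : a (N+2) ≤ (1 - α / ((N:ℝ)+1)) * a (N+1) + ω (N+1) := by
          have : ((N+1:ℕ):ℝ) = (N:ℝ)+1 := by push_cast; ring
          simpa [this] using h1
        calc ((N:ℝ)+1) * a (N+2)
            ≤ ((N:ℝ)+1) * ((1 - α / ((N:ℝ)+1)) * a (N+1) + ω (N+1)) :=
              mul_le_mul_of_nonneg_left h1' (le_of_lt hpos)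
          _ = ((N:ℝ)+1-α) * a (N+1) + ((N:ℝ)+1) * ω (N+1) := by
              field_simp
      rw [Finset.sum_range_succ, Finset.sum_range_succ]
      push_cast
      nlinarith [ha (N+1)]
  -- Summability of a
  have hWsum : ∀ N : ℕ, ∑ k ∈ Finset.range N, ((k:ℝ)+1) * ω (k+1)
      ≤ ∑' k : ℕ, ((k:ℝ)+1) * ω (k+1) :=
    fun N => Summable.sum_le_tsum _ (fun k _ => mul_nonneg (by positivity) (hω _)) hsum1
  have hsumA' : Summable fun k : ℕ => a (k+1) := by
    apply summable_of_sum_range_le (c := (∑' k : ℕ, ((k:ℝ)+1) * ω (k+1)) / (α-1))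
      (fun k => ha _)
    intro N
    rw [le_div_iff₀ hα0]
    have := key N
    have h2 := hWsum N
    nlinarith [mul_nonneg (Nat.cast_nonneg N : (0:ℝ) ≤ N) (ha (N+1))]
  have hsumA : Summable a := (summable_nat_add_iff 1).mp hsumA'
  refine ⟨hsumA, ?_⟩
  -- the perturbation sequence
  set τ : ℕ → ℝ := fun k => ((k:ℝ)+1) * ω k with hτ
  have hτ0 : ∀ k, 0 ≤ τ k := fun k => mul_nonneg (by positivity) (hω k)
  have hτsum : Summable τ := by
    rw [← summable_nat_add_iff 1]
    apply Summable.of_nonneg_of_le (fun k => hτ0 _) _ (hsum1.mul_left 2)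
    intro k
    simp only [hτ]
    push_cast
    nlinarith [hω (k+1), (Nat.cast_nonneg k : (0:ℝ) ≤ k)]
  -- almost-decreasing property of b k = k * a k
  have hb : ∀ k : ℕ, 1 ≤ k → ((k:ℝ)+1) * a (k+1) ≤ (k:ℝ) * a k + τ k := by
    intro k hk
    have hk0 : (0:ℝ) < k := by exact_mod_cast hk
    have h1 := hrec k hk
    have e : ((k:ℝ)+1)*(1-α/(k:ℝ)) = (k:ℝ) + 1 - α - α/(k:ℝ) := by
      field_simp; ring
    have hcoef : ((k:ℝ)+1)*(1-α/(k:ℝ)) ≤ (k:ℝ) := by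
      have : (0:ℝ) < α/(k:ℝ) := by positivity
      rw [e]; linarith
    calc ((k:ℝ)+1) * a (k+1)
        ≤ ((k:ℝ)+1) * ((1 - α/(k:ℝ)) * a k + ω k) :=
          mul_le_mul_of_nonneg_left h1 (by positivity)
      _ = (((k:ℝ)+1)*(1-α/(k:ℝ))) * a k + τ k := by rw [hτ]; ring
      _ ≤ (k:ℝ) * a k + τ k := by
          have := mul_le_mul_of_nonneg_right hcoef (ha k)
          linarith
  have mono : ∀ n : ℕ, 1 ≤ n → ∀ m : ℕ, n ≤ m →
      (m:ℝ) * a m ≤ (n:ℝ) * a n + ∑ k ∈ Finset.Ico n m, τ k := by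
    intro n hn m hm
    induction m, hm using Nat.le_induction with
    | base => simp
    | succ m hm ih =>
      have hm1 : 1 ≤ m := le_trans hn hm
      have := hb m hm1
      rw [Finset.sum_Ico_succ_top hm]
      push_cast
      linarith
  -- liminf is zero
  have claim : ∀ ε : ℝ, 0 < ε → ∀ N : ℕ, ∃ n : ℕ, N ≤ n ∧ 1 ≤ n ∧ (n:ℝ) * a n < ε := by
    intro ε hε N
    by_contra hcon
    push_neg at hcon
    set M := max N 1 with hM
    have hMain : ∀ k : ℕ, ε / ((k:ℝ) + M) ≤ a (k + M) := by
      intro k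
      have h1 : N ≤ k + M := le_trans (le_max_left _ _) (Nat.le_add_left _ _)
      have h2 : 1 ≤ k + M := le_trans (le_max_right _ _) (Nat.le_add_left _ _)
      have h3 := hcon (k + M) h1 h2
      have hpos : (0:ℝ) < (k:ℝ) + M := by
        have : (0:ℝ) < ((k+M:ℕ):ℝ) := by exact_mod_cast h2
        push_cast at this; linarith
      rw [div_le_iff₀ hpos]
      have : ((k+M:ℕ):ℝ) = (k:ℝ) + M := by push_cast; ring
      rw [this] at h3
      linarith [h3]
    have hS : Summable fun k : ℕ => ε / ((k:ℝ) + M) := by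
      apply Summable.of_nonneg_of_le (fun k => by positivity) hMain
      exact (summable_nat_add_iff M).mpr hsumA
    have hS2 : Summable fun k : ℕ => 1 / ((k:ℝ) + M) := by
      have := hS.mul_left ε⁻¹
      have heq : ∀ k : ℕ, ε⁻¹ * (ε / ((k:ℝ) + M)) = 1 / ((k:ℝ) + M) := by
        intro k; field_simp
      simpa [heq] using this
    have hS3 : Summable fun k : ℕ => 1 / ((k:ℝ)) := by
      rw [← summable_nat_add_iff M]
      have : ∀ k : ℕ, 1 / (((k + M:ℕ)):ℝ) = 1 / ((k:ℝ) + M) := by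
        intro k; push_cast; ring_nf
      simpa [this] using hS2
    exact Real.not_summable_one_div_natCast hS3
  -- conclude the limit
  rw [Metric.tendsto_atTop]
  intro ε hε
  -- tail of τ
  have htail : Tendsto (fun i : ℕ => ∑' k : ℕ, τ (k + i)) atTop (nhds 0) :=
    tendsto_sum_nat_add τ
  obtain ⟨N₁, hN₁⟩ := (Metric.tendsto_atTop.mp htail) (ε/2) (by linarith)
  have hN₁' : ∑' k : ℕ, τ (k + N₁) < ε/2 := by
    have := hN₁ N₁ le_rfl
    rw [Real.dist_eq, sub_zero] at this
    calc ∑' k : ℕ, τ (k + N₁) ≤ |∑' k : ℕ, τ (k + N₁)| := le_abs_self _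
      _ < ε/2 := this
  obtain ⟨n, hnN, hn1, hbn⟩ := claim (ε/2) (by linarith) N₁
  refine ⟨n, fun m hm => ?_⟩
  rw [Real.dist_eq, sub_zero, abs_of_nonneg (mul_nonneg (Nat.cast_nonneg m) (ha m))]
  have h1 := mono n hn1 m hm
  have hIco : ∑ k ∈ Finset.Ico n m, τ k ≤ ∑' k : ℕ, τ (k + N₁) := by
    have hsub : Finset.Ico n m ⊆ Finset.Ico N₁ m := by
      apply Finset.Ico_subset_Ico hnN le_rfl
    have h2 : ∑ k ∈ Finset.Ico n m, τ k ≤ ∑ k ∈ Finset.Ico N₁ m, τ k :=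
      Finset.sum_le_sum_of_subset_of_nonneg hsub (fun k _ _ => hτ0 k)
    have h3 : ∑ k ∈ Finset.Ico N₁ m, τ k = ∑ k ∈ Finset.range (m - N₁), τ (N₁ + k) :=
      Finset.sum_Ico_eq_sum_range τ N₁ m
    have hτshift : Summable fun k => τ (k + N₁) := (summable_nat_add_iff N₁).mpr hτsum
    have h4 : ∑ k ∈ Finset.range (m - N₁), τ (N₁ + k) ≤ ∑' k : ℕ, τ (k + N₁) := by
      have heq : (fun k => τ (N₁ + k)) = fun k => τ (k + N₁) := by
        funext k; rw [add_comm]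
      rw [heq]
      exact Summable.sum_le_tsum _ (fun k _ => hτ0 _) hτshift
    linarith
  linarith
end

section
/- (Discrete Gronwall–Bellman inequality) Let (a_k) be a sequence of nonnegative real numbers, (β_k) a summable sequence of nonnegative real numbers, and c ≥ 0, such that a_k² ≤ c² + Σ_{j=1}^{k} β_j a_j for all k ≥ 1. Then a_k ≤ c + Σ_{j=1}^{∞} β_j for all k ≥ 1. -/
set_option autoImplicit false

/-- Discrete Gronwall–Bellman inequality: if `(a_k)` is nonnegative, `(β_k)` is a
summable sequence of nonnegative numbers, `c ≥ 0`, and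
`a_k² ≤ c² + Σ_{j=1}^{k} β_j a_j` for all `k ≥ 1`, then
`a_k ≤ c + Σ_{j=1}^{∞} β_j` for all `k ≥ 1`. -/
theorem discrete_gronwall_bellman
    (a β : ℕ → ℝ) (ha : ∀ k, 0 ≤ a k) (hβ : ∀ k, 0 ≤ β k)
    (hsum : Summable fun j => β (j + 1)) (c : ℝ) (hc : 0 ≤ c)
    (h : ∀ k, 1 ≤ k → a k ^ 2 ≤ c ^ 2 + ∑ j ∈ Finset.Icc 1 k, β j * a j) :
    ∀ k, 1 ≤ k → a k ≤ c + ∑' j : ℕ, β (j + 1) := by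
  intro k hk
  set B := ∑' j : ℕ, β (j + 1) with hB
  have hBnn : 0 ≤ B := tsum_nonneg fun j => hβ _
  have hne : (Finset.Icc 1 k).Nonempty := ⟨1, by simp [hk]⟩
  set M := (Finset.Icc 1 k).sup' hne a with hM
  have hak : a k ≤ M := Finset.le_sup' a (by simp [hk])
  have hMnn : 0 ≤ M := le_trans (ha 1) (Finset.le_sup' a (by simp [hk]))
  obtain ⟨m, hm, hma⟩ := Finset.exists_mem_eq_sup' hne a
  rw [Finset.mem_Icc] at hm
  have hpart : ∑ j ∈ Finset.Icc 1 m, β j ≤ B := by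
    have h1 : ∑ j ∈ Finset.Icc 1 m, β j = ∑ j ∈ Finset.range m, β (j + 1) := by
      rw [show Finset.Icc 1 m = Finset.Ico 1 (m + 1) by rfl,
        Finset.sum_Ico_eq_sum_range]
      simp [add_comm]
    rw [h1]
    exact Summable.sum_le_tsum (Finset.range m) (fun j _ => hβ _) hsum
  have hMsq : M ^ 2 ≤ c ^ 2 + B * M := by
    have h2 : a m ^ 2 ≤ c ^ 2 + ∑ j ∈ Finset.Icc 1 m, β j * a j := h m hm.1
    have h3 : ∑ j ∈ Finset.Icc 1 m, β j * a j ≤ ∑ j ∈ Finset.Icc 1 m, β j * M := by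
      apply Finset.sum_le_sum
      intro j hj
      rw [Finset.mem_Icc] at hj
      exact mul_le_mul_of_nonneg_left
        (Finset.le_sup' a (Finset.mem_Icc.mpr ⟨hj.1, le_trans hj.2 hm.2⟩)) (hβ j)
    have h4 : ∑ j ∈ Finset.Icc 1 m, β j * M = (∑ j ∈ Finset.Icc 1 m, β j) * M := by
      rw [Finset.sum_mul]
    nlinarith [mul_le_mul_of_nonneg_right hpart hMnn]
  have hMle : M ≤ c + B := by nlinarith [sq_nonneg (M - c - B)]
  linarith
end
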